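/- Let M ≥ 2, d ≥ 1 and let A = (A_1,…,A_M) be an irreducible tuple of d×d real matrices. Then e^{P(A,2)} = ρ( Σ_{i=1}^M A_i ⊗ A_i ), where A_i ⊗ A_i denotes the Kronecker product of A_i with itself (a d²×d² real matrix) and ρ is the spectral radius. -/
import Mathlib


open MeasureTheory Filter Topology

/-- The operator norm on square real matrices induced by the Euclidean norm. -/
noncomputable def opNorm {n : Type*} [Fintype n] [DecidableEq n]
    (X : Matrix n n ℝ) : ℝ :=
  ‖Matrix.toEuclideanCLM (𝕜 := ℝ) X‖

/-- The spectral radius `ρ(X) = inf_{k ≥ 1} ‖X^k‖^(1/k)` (Gelfand). -/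
noncomputable def specRad {n : Type*} [Fintype n] [DecidableEq n]
    (X : Matrix n n ℝ) : ℝ :=
  ⨅ k : ℕ, opNorm (X ^ (k + 1)) ^ ((1 : ℝ) / (k + 1))

/-- The product `A_{x_n} ⋯ A_{x_1}` associated to the word `x = (x_1, …, x_n)`. -/
noncomputable def wordProd {M d n : ℕ} (A : Fin M → Matrix (Fin d) (Fin d) ℝ)
    (x : Fin n → Fin M) : Matrix (Fin d) (Fin d) ℝ :=
  (List.ofFn (fun i => A (x i))).reverse.prod

/-- The product `A_{x_n} ⋯ A_{x_1}` associated to the word `w = [x_1, …, x_n]`. -/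
noncomputable def listProd {M d : ℕ} (A : Fin M → Matrix (Fin d) (Fin d) ℝ)
    (w : List (Fin M)) : Matrix (Fin d) (Fin d) ℝ :=
  ((w.map A).reverse).prod

/-- Irreducibility: no invariant subspace `U` with `0 < dim U < d`. -/
def IsIrredTuple {M d : ℕ} (A : Fin M → Matrix (Fin d) (Fin d) ℝ) : Prop :=
  ¬ ∃ U : Submodule ℝ (Fin d → ℝ),
      (∀ i, U.map (A i).mulVecLin ≤ U) ∧ U ≠ ⊥ ∧ U ≠ ⊤

/-- The shift map on `Σ_M = {1,…,M}^ℕ`. -/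
def shift {M : ℕ} : (ℕ → Fin M) → (ℕ → Fin M) := fun x n => x (n + 1)

/-- The cylinder set `[x_1 ⋯ x_n]` determined by the word `w = [x_1, …, x_n]`. -/
def cyl {M : ℕ} (w : List (Fin M)) : Set (ℕ → Fin M) :=
  {y | ∀ i : Fin w.length, y (i : ℕ) = w.get i}

/-- The Gibbs inequality for `(A, s)` with constants `C > 0`, `P ∈ ℝ`. -/
def IsGibbs {M d : ℕ} (A : Fin M → Matrix (Fin d) (Fin d) ℝ) (s C P : ℝ)
    (μ : Measure (ℕ → Fin M)) : Prop :=
  ∀ w : List (Fin M), w ≠ [] →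
    C⁻¹ * (μ (cyl w)).toReal ≤ Real.exp (-(w.length : ℝ) * P) * opNorm (listProd A w) ^ s ∧
    Real.exp (-(w.length : ℝ) * P) * opNorm (listProd A w) ^ s ≤ C * (μ (cyl w)).toReal

/-- The pressure `P(A,s) = inf_{n ≥ 1} (1/n) log Σ_{|x| = n} ‖A_{x_n} ⋯ A_{x_1}‖^s ∈ [-∞, ∞)`,
with the convention that a term is `-∞` when the corresponding sum vanishes. -/
noncomputable def pressure {M d : ℕ} (A : Fin M → Matrix (Fin d) (Fin d) ℝ) (s : ℝ) : EReal :=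
  ⨅ n : ℕ,
    if (∑ x : Fin (n + 1) → Fin M, opNorm (wordProd A x) ^ s) = 0 then (⊥ : EReal)
    else ((Real.log (∑ x : Fin (n + 1) → Fin M, opNorm (wordProd A x) ^ s) / (n + 1) : ℝ) : EReal)

/-- `e^{P(A,s)}`, with the convention `e^{-∞} = 0`. -/
noncomputable def expPressure {M d : ℕ} (A : Fin M → Matrix (Fin d) (Fin d) ℝ) (s : ℝ) : ℝ :=
  if pressure A s = ⊥ then 0 else Real.exp (pressure A s).toReal


noncomputable def F2 {n : Type*} [Fintype n] (X : Matrix n n ℝ) : ℝ :=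
  ∑ i, ∑ j, X i j ^ 2

lemma opNorm_nonneg' {n : Type*} [Fintype n] [DecidableEq n] (X : Matrix n n ℝ) :
    0 ≤ opNorm X := norm_nonneg _

lemma opNorm_sum_le {n ι : Type*} [Fintype n] [DecidableEq n] (s : Finset ι)
    (f : ι → Matrix n n ℝ) : opNorm (∑ i ∈ s, f i) ≤ ∑ i ∈ s, opNorm (f i) := by
  unfold opNorm; rw [map_sum]; exact norm_sum_le _ _

lemma opNorm_mul_le {n : Type*} [Fintype n] [DecidableEq n] (X Y : Matrix n n ℝ) :
    opNorm (X * Y) ≤ opNorm X * opNorm Y := by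
  unfold opNorm; rw [map_mul]; exact norm_mul_le _ _

lemma F2_nonneg {n : Type*} [Fintype n] (X : Matrix n n ℝ) : 0 ≤ F2 X :=
  Finset.sum_nonneg fun _ _ => Finset.sum_nonneg fun _ _ => sq_nonneg _

lemma coord_abs_le_norm {n : Type*} [Fintype n] (w : EuclideanSpace ℝ n) (i : n) :
    |w i| ≤ ‖w‖ := by
  rw [EuclideanSpace.norm_eq]
  rw [show |w i| = Real.sqrt (|w i|^2) by rw [Real.sqrt_sq_eq_abs, abs_abs]]
  apply Real.sqrt_le_sqrt
  rw [sq_abs]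
  calc w i ^ 2 = ‖w i‖^2 := by rw [Real.norm_eq_abs, sq_abs]
    _ ≤ ∑ j, ‖w j‖ ^ 2 := Finset.single_le_sum (f := fun j => ‖w j‖^2)
        (fun j _ => sq_nonneg _) (Finset.mem_univ i)

lemma opNorm_le_sqrt_F2 {n : Type*} [Fintype n] [DecidableEq n] (X : Matrix n n ℝ) :
    opNorm X ≤ Real.sqrt (F2 X) := by
  apply ContinuousLinearMap.opNorm_le_bound _ (Real.sqrt_nonneg _)
  intro v
  have happ : Matrix.toEuclideanCLM (𝕜 := ℝ) X v =
      (WithLp.equiv _ _).symm (X.mulVec (WithLp.equiv _ _ v)) := by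
    rfl
  rw [happ]
  rw [EuclideanSpace.norm_eq]
  have hv : ‖v‖ = Real.sqrt (∑ j, (v j)^2) := by
    rw [EuclideanSpace.norm_eq]
    congr 1; apply Finset.sum_congr rfl; intro j _; rw [Real.norm_eq_abs, sq_abs]
  rw [hv, ← Real.sqrt_mul (F2_nonneg X)]
  apply Real.sqrt_le_sqrt
  have : ∀ i, ‖((WithLp.equiv 2 (n → ℝ)).symm (X.mulVec (WithLp.equiv 2 (n → ℝ) v))) i‖^2
      ≤ (∑ j, X i j ^2) * (∑ j, (v j)^2) := by
    intro i
    have : ((WithLp.equiv 2 (n → ℝ)).symm (X.mulVec (WithLp.equiv 2 (n → ℝ) v))) i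
        = ∑ j, X i j * v j := by
      simp [Matrix.mulVec, dotProduct]
    rw [this, Real.norm_eq_abs, sq_abs]
    exact Finset.sum_mul_sq_le_sq_mul_sq _ _ _
  calc ∑ i, ‖((WithLp.equiv 2 (n → ℝ)).symm (X.mulVec (WithLp.equiv 2 (n → ℝ) v))) i‖^2
      ≤ ∑ i, (∑ j, X i j ^2) * (∑ j, (v j)^2) := Finset.sum_le_sum fun i _ => this i
    _ = F2 X * ∑ j, (v j)^2 := by rw [F2, ← Finset.sum_mul]

lemma abs_entry_le_opNorm {n : Type*} [Fintype n] [DecidableEq n] (X : Matrix n n ℝ)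
    (i j : n) : |X i j| ≤ opNorm X := by
  have h := (Matrix.toEuclideanCLM (𝕜 := ℝ) X).le_opNorm
    ((WithLp.equiv 2 (n → ℝ)).symm (Pi.single j 1))
  have hv : ‖((WithLp.equiv 2 (n → ℝ)).symm (Pi.single j (1:ℝ)))‖ = 1 := by
    have : ((WithLp.equiv 2 (n → ℝ)).symm (Pi.single j (1:ℝ)))
        = EuclideanSpace.single j (1:ℝ) := rfl
    rw [this, EuclideanSpace.norm_single]; norm_num
  rw [hv, mul_one] at h
  refine le_trans ?_ h
  have happ : Matrix.toEuclideanCLM (𝕜 := ℝ) X ((WithLp.equiv 2 (n → ℝ)).symm (Pi.single j 1)) =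
      (WithLp.equiv 2 (n → ℝ)).symm (X.mulVec (Pi.single j 1)) := rfl
  rw [happ]
  have hc : ((WithLp.equiv 2 (n → ℝ)).symm (X.mulVec (Pi.single j 1))) i = X i j := by
    show X.mulVec (Pi.single j 1) i = X i j
    simp [Matrix.mulVec_single]
  calc |X i j| = |((WithLp.equiv 2 (n → ℝ)).symm (X.mulVec (Pi.single j 1))) i| := by rw [hc]
    _ ≤ _ := coord_abs_le_norm _ i

lemma F2_le {n : Type*} [Fintype n] [DecidableEq n] (X : Matrix n n ℝ) :
    F2 X ≤ (Fintype.card n)^2 * opNorm X ^ 2 := by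
  have : ∀ i j : n, X i j ^ 2 ≤ opNorm X ^ 2 := by
    intro i j
    rw [← sq_abs (X i j)]
    exact pow_le_pow_left₀ (abs_nonneg _) (abs_entry_le_opNorm X i j) 2
  calc F2 X ≤ ∑ i : n, ∑ j : n, opNorm X ^2 :=
        Finset.sum_le_sum fun i _ => Finset.sum_le_sum fun j _ => this i j
    _ = (Fintype.card n)^2 * opNorm X ^ 2 := by
        rw [Finset.sum_const, Finset.sum_const, nsmul_eq_mul, nsmul_eq_mul, Finset.card_univ]
        ring

lemma wordProd_zero {M d : ℕ} (A : Fin M → Matrix (Fin d) (Fin d) ℝ) (x : Fin 0 → Fin M) :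
    wordProd A x = 1 := by simp [wordProd]

lemma wordProd_cons {M d n : ℕ} (A : Fin M → Matrix (Fin d) (Fin d) ℝ) (j : Fin M)
    (x : Fin n → Fin M) : wordProd A (Fin.cons j x) = wordProd A x * A j := by
  unfold wordProd
  rw [List.ofFn_succ]
  simp only [Fin.cons_zero, Fin.cons_succ]
  rw [List.reverse_cons, List.prod_append, List.prod_singleton]

open Matrix in
lemma kron_pow {M d : ℕ} (A : Fin M → Matrix (Fin d) (Fin d) ℝ) (n : ℕ) :
    (∑ i, Matrix.kroneckerMap (· * ·) (A i) (A i)) ^ n =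
      ∑ x : Fin n → Fin M, Matrix.kroneckerMap (· * ·) (wordProd A x) (wordProd A x) := by
  induction n with
  | zero =>
    rw [pow_zero]
    rw [Finset.sum_congr rfl (fun x _ => by rw [wordProd_zero])]
    rw [Finset.sum_const]
    simp [Matrix.one_kronecker_one]
  | succ n ih =>
    rw [pow_succ, ih]
    rw [Finset.sum_mul_sum]
    rw [← ((Fin.consEquiv (fun _ : Fin (n+1) => Fin M)).sum_comp
      (fun x => Matrix.kroneckerMap (· * ·) (wordProd A x) (wordProd A x)))]
    rw [Fintype.sum_prod_type]
    conv_lhs => rw [Finset.sum_comm]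
    apply Finset.sum_congr rfl
    intro j _
    apply Finset.sum_congr rfl
    intro x _
    show kroneckerMap (· * ·) (wordProd A x) (wordProd A x) *
        kroneckerMap (· * ·) (A j) (A j) =
      kroneckerMap (· * ·) (wordProd A (Fin.cons j x)) (wordProd A (Fin.cons j x))
    rw [wordProd_cons, Matrix.mul_kronecker_mul]

lemma wordProd_append {M d m n : ℕ} (A : Fin M → Matrix (Fin d) (Fin d) ℝ)
    (u : Fin m → Fin M) (v : Fin n → Fin M) :
    wordProd A (Fin.append u v) = wordProd A v * wordProd A u := by
  unfold wordProd
  have h : (fun i => A (Fin.append u v i)) = Fin.append (fun i => A (u i)) (fun i => A (v i)) := by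
    funext i
    refine Fin.addCases (fun i => ?_) (fun i => ?_) i <;>
      simp [Fin.append_left, Fin.append_right]
  rw [h, List.ofFn_fin_append, List.reverse_append, List.prod_append]

lemma F2_kron {d : ℕ} (X : Matrix (Fin d) (Fin d) ℝ) :
    F2 (Matrix.kroneckerMap (· * ·) X X) = F2 X ^ 2 := by
  unfold F2
  simp only [Fintype.sum_prod_type, Matrix.kroneckerMap_apply, mul_pow]
  conv_rhs => rw [sq, Finset.sum_mul_sum]
  simp_rw [Finset.sum_mul_sum]

lemma opNorm_kron_le {d : ℕ} (X : Matrix (Fin d) (Fin d) ℝ) :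
    opNorm (Matrix.kroneckerMap (· * ·) X X) ≤ (d:ℝ)^2 * opNorm X ^ 2 := by
  calc opNorm (Matrix.kroneckerMap (· * ·) X X)
      ≤ Real.sqrt (F2 (Matrix.kroneckerMap (· * ·) X X)) := opNorm_le_sqrt_F2 _
    _ = Real.sqrt (F2 X ^ 2) := by rw [F2_kron]
    _ = F2 X := by rw [Real.sqrt_sq (F2_nonneg X)]
    _ ≤ (d:ℝ)^2 * opNorm X ^ 2 := by
        have := F2_le X
        simpa [Fintype.card_fin] using this

lemma opNorm_sq_le_F2 {n : Type*} [Fintype n] [DecidableEq n] (X : Matrix n n ℝ) :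
    opNorm X ^ 2 ≤ F2 X := by
  calc opNorm X ^2 ≤ Real.sqrt (F2 X) ^ 2 :=
        pow_le_pow_left₀ (norm_nonneg _) (opNorm_le_sqrt_F2 X) 2
    _ = F2 X := Real.sq_sqrt (F2_nonneg X)

noncomputable def Ssum {M d : ℕ} (A : Fin M → Matrix (Fin d) (Fin d) ℝ) (n : ℕ) : ℝ :=
  ∑ x : Fin n → Fin M, opNorm (wordProd A x) ^ 2

lemma Ssum_nonneg {M d : ℕ} (A : Fin M → Matrix (Fin d) (Fin d) ℝ) (n : ℕ) :
    0 ≤ Ssum A n := Finset.sum_nonneg fun _ _ => sq_nonneg _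

lemma opNorm_pow_le_Ssum {M d : ℕ} (A : Fin M → Matrix (Fin d) (Fin d) ℝ) (n : ℕ) :
    opNorm ((∑ i, Matrix.kroneckerMap (· * ·) (A i) (A i)) ^ n) ≤ (d:ℝ)^2 * Ssum A n := by
  rw [kron_pow]
  calc opNorm (∑ x : Fin n → Fin M, Matrix.kroneckerMap (· * ·) (wordProd A x) (wordProd A x))
      ≤ ∑ x : Fin n → Fin M, opNorm (Matrix.kroneckerMap (· * ·) (wordProd A x) (wordProd A x)) :=
        opNorm_sum_le _ _
    _ ≤ ∑ x : Fin n → Fin M, (d:ℝ)^2 * opNorm (wordProd A x) ^ 2 :=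
        Finset.sum_le_sum fun x _ => opNorm_kron_le _
    _ = (d:ℝ)^2 * Ssum A n := by rw [Ssum, Finset.mul_sum]

lemma Ssum_le_opNorm_pow {M d : ℕ} (A : Fin M → Matrix (Fin d) (Fin d) ℝ) (n : ℕ) :
    Ssum A n ≤ (d:ℝ)^2 * opNorm ((∑ i, Matrix.kroneckerMap (· * ·) (A i) (A i)) ^ n) := by
  set B := (∑ i, Matrix.kroneckerMap (· * ·) (A i) (A i)) with hB
  have key : ∀ i j : Fin d, (B ^ n) (i, i) (j, j) = ∑ x : Fin n → Fin M, wordProd A x i j ^ 2 := by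
    intro i j
    rw [kron_pow]
    rw [Matrix.sum_apply]
    apply Finset.sum_congr rfl; intro x _
    rw [Matrix.kroneckerMap_apply, sq]
  calc Ssum A n ≤ ∑ x : Fin n → Fin M, F2 (wordProd A x) :=
        Finset.sum_le_sum fun x _ => opNorm_sq_le_F2 _
    _ = ∑ x : Fin n → Fin M, ∑ i, ∑ j, wordProd A x i j ^ 2 := rfl
    _ = ∑ i, ∑ j, ∑ x : Fin n → Fin M, wordProd A x i j ^ 2 := by
        rw [Finset.sum_comm]
        apply Finset.sum_congr rfl; intro i _
        rw [Finset.sum_comm]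
    _ = ∑ i : Fin d, ∑ j : Fin d, (B ^ n) (i, i) (j, j) := by
        apply Finset.sum_congr rfl; intro i _
        apply Finset.sum_congr rfl; intro j _
        rw [key]
    _ ≤ ∑ i : Fin d, ∑ j : Fin d, opNorm (B ^ n) := by
        apply Finset.sum_le_sum; intro i _
        apply Finset.sum_le_sum; intro j _
        exact le_trans (le_abs_self _) (abs_entry_le_opNorm _ _ _)
    _ = (d:ℝ)^2 * opNorm (B ^ n) := by
        rw [Finset.sum_const, Finset.sum_const, nsmul_eq_mul, nsmul_eq_mul, Finset.card_univ,
          Fintype.card_fin]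
        ring

lemma Ssum_add_le {M d : ℕ} (A : Fin M → Matrix (Fin d) (Fin d) ℝ) (m n : ℕ) :
    Ssum A (m + n) ≤ Ssum A m * Ssum A n := by
  unfold Ssum
  rw [← ((Fin.appendEquiv (α := Fin M) m n).sum_comp
    (fun x => opNorm (wordProd A x) ^ 2))]
  rw [Finset.sum_mul_sum, Fintype.sum_prod_type]
  apply Finset.sum_le_sum; intro u _
  apply Finset.sum_le_sum; intro v _
  show opNorm (wordProd A (Fin.append u v)) ^ 2 ≤ _
  rw [wordProd_append]
  calc opNorm (wordProd A v * wordProd A u) ^2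
      ≤ (opNorm (wordProd A v) * opNorm (wordProd A u)) ^2 :=
        pow_le_pow_left₀ (norm_nonneg _) (opNorm_mul_le _ _) 2
    _ = opNorm (wordProd A u) ^2 * opNorm (wordProd A v) ^2 := by ring

lemma Ssum_mul_le {M d : ℕ} (A : Fin M → Matrix (Fin d) (Fin d) ℝ) (m k : ℕ) (hk : 1 ≤ k) :
    Ssum A (m * k) ≤ Ssum A m ^ k := by
  induction k with
  | zero => omega
  | succ k ih =>
    rcases Nat.eq_or_lt_of_le hk with h | h
    · rw [← h, pow_one, mul_one]
    · have hk' : 1 ≤ k := by omega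
      calc Ssum A (m * (k+1)) = Ssum A (m * k + m) := by ring_nf
        _ ≤ Ssum A (m * k) * Ssum A m := Ssum_add_le A _ _
        _ ≤ Ssum A m ^ k * Ssum A m :=
            mul_le_mul_of_nonneg_right (ih hk') (Ssum_nonneg A m)
        _ = Ssum A m ^ (k+1) := by ring

lemma opNorm_pow_le' {n : Type*} [Fintype n] [DecidableEq n] (X : Matrix n n ℝ) (k : ℕ)
    (hk : 1 ≤ k) : opNorm (X ^ k) ≤ opNorm X ^ k := by
  induction k with
  | zero => omega
  | succ k ih =>
    rcases Nat.eq_or_lt_of_le hk with h | h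
    · rw [← h]; simp [pow_one]
    · have hk' : 1 ≤ k := by omega
      calc opNorm (X ^ (k+1)) = opNorm (X ^ k * X) := by rw [pow_succ]
        _ ≤ opNorm (X ^ k) * opNorm X := opNorm_mul_le _ _
        _ ≤ opNorm X ^ k * opNorm X :=
            mul_le_mul_of_nonneg_right (ih hk') (norm_nonneg _)
        _ = opNorm X ^ (k+1) := by ring

open Filter Topology in
lemma helper_tendsto (C c : ℝ) (hC : 0 < C) (m : ℕ) (hm : 1 ≤ m) :
    Tendsto (fun j : ℕ => C ^ ((1:ℝ)/((m:ℝ)*((j:ℝ)+1))) * c) atTop (𝓝 c) := by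
  have h1 : Tendsto (fun j : ℕ => (m:ℝ)*((j:ℝ)+1)) atTop atTop := by
    apply tendsto_atTop_mono (f := fun j : ℕ => (j:ℝ))
    · intro j
      have h1 : (1:ℝ) ≤ (m:ℝ) := by exact_mod_cast hm
      nlinarith [Nat.cast_nonneg (α := ℝ) j]
    · exact tendsto_natCast_atTop_atTop
  have h0 : Tendsto (fun j : ℕ => (1:ℝ)/((m:ℝ)*((j:ℝ)+1))) atTop (𝓝 0) := by
    have := h1.inv_tendsto_atTop
    simp only [Pi.inv_def] at this
    simpa [one_div] using this
  have h2 : Tendsto (fun j : ℕ => C ^ ((1:ℝ)/((m:ℝ)*((j:ℝ)+1)))) atTop (𝓝 1) := by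
    have hmul : Tendsto (fun j : ℕ => Real.log C * ((1:ℝ)/((m:ℝ)*((j:ℝ)+1))))
        atTop (𝓝 0) := by simpa using h0.const_mul (Real.log C)
    have h2' := (Real.continuous_exp.tendsto 0).comp hmul
    simp only [Function.comp_def, Real.exp_zero] at h2'
    convert h2' using 2 with j
    rw [Real.rpow_def_of_pos hC]
  simpa using h2.mul_const c

lemma le_of_forall_mul_rpow (a c C : ℝ) (hC : 0 < C) (m : ℕ) (hm : 1 ≤ m)
    (h : ∀ j : ℕ, a ≤ C ^ ((1:ℝ)/((m:ℝ)*((j:ℝ)+1))) * c) : a ≤ c :=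
  ge_of_tendsto' (helper_tendsto C c hC m hm) h

lemma rpow_helper (D z : ℝ) (hD : 0 ≤ D) (hz : 0 ≤ z) (m j : ℕ) (hm : 1 ≤ m) :
    (D * z^(j+1)) ^ ((1:ℝ)/((m:ℝ)*((j:ℝ)+1))) =
      D ^ ((1:ℝ)/((m:ℝ)*((j:ℝ)+1))) * z ^ ((1:ℝ)/(m:ℝ)) := by
  rw [Real.mul_rpow hD (pow_nonneg hz _), ← Real.rpow_natCast z (j+1), ← Real.rpow_mul hz]
  congr 2
  have hm0 : ((m:ℝ)) ≠ 0 := by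
    have : (0:ℝ) < m := by exact_mod_cast hm
    linarith
  have hj0 : ((j:ℝ)+1) ≠ 0 := by positivity
  push_cast
  field_simp

/-- `e^{P(A,2)} = ρ( Σ_i A_i ⊗ A_i )` for irreducible `A`. -/
theorem stmt_16 {M d : ℕ} (hM : 2 ≤ M) (hd : 1 ≤ d)
    (A : Fin M → Matrix (Fin d) (Fin d) ℝ) (hA : IsIrredTuple A) :
    expPressure A 2 = specRad (∑ i, Matrix.kroneckerMap (· * ·) (A i) (A i)) := by
  set B := ∑ i, Matrix.kroneckerMap (· * ·) (A i) (A i) with hBdef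
  set D : ℝ := (d:ℝ)^2 with hDdef
  have hD0 : 0 < D := by
    have : (0:ℝ) < d := by exact_mod_cast hd
    positivity
  have hD1 : 1 ≤ D := by
    have : (1:ℝ) ≤ d := by exact_mod_cast hd
    nlinarith
  have hrS : ∀ n, opNorm (B ^ n) ≤ D * Ssum A n := opNorm_pow_le_Ssum A
  have hSr : ∀ n, Ssum A n ≤ D * opNorm (B ^ n) := Ssum_le_opNorm_pow A
  have hcast : ∀ n : ℕ,
      (∑ x : Fin (n+1) → Fin M, opNorm (wordProd A x) ^ (2:ℝ)) = Ssum A (n+1) := by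
    intro n
    unfold Ssum
    apply Finset.sum_congr rfl
    intro x _
    rw [show (2:ℝ) = ((2:ℕ):ℝ) by norm_num, Real.rpow_natCast]
  have hbdd : BddBelow (Set.range fun k : ℕ => opNorm (B^(k+1)) ^ ((1:ℝ)/(k+1))) := by
    refine ⟨0, ?_⟩
    rintro _ ⟨k, rfl⟩
    exact Real.rpow_nonneg (opNorm_nonneg' _) _
  have hspec_le : ∀ t : ℕ, specRad B ≤ opNorm (B^(t+1)) ^ ((1:ℝ)/(t+1)) :=
    fun t => ciInf_le hbdd t
  have hspec_nonneg : 0 ≤ specRad B :=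
    le_ciInf fun k => Real.rpow_nonneg (opNorm_nonneg' _) _
  by_cases hz : ∃ n : ℕ, Ssum A (n+1) = 0
  · -- degenerate case
    obtain ⟨n, hn⟩ := hz
    have hpb : pressure A 2 = ⊥ := by
      refine le_bot_iff.mp (le_trans (iInf_le _ n) ?_)
      rw [if_pos (by rw [hcast n]; exact hn)]
    have hr0 : opNorm (B^(n+1)) = 0 := by
      refine le_antisymm ?_ (opNorm_nonneg' _)
      calc opNorm (B^(n+1)) ≤ D * Ssum A (n+1) := hrS _
        _ = 0 := by rw [hn, mul_zero]
    have hs0 : specRad B = 0 := by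
      refine le_antisymm ?_ hspec_nonneg
      refine (hspec_le n).trans_eq ?_
      rw [hr0, Real.zero_rpow (by positivity)]
    rw [expPressure, if_pos hpb, hs0]
  · push_neg at hz
    have hpos : ∀ n, 0 < Ssum A (n+1) := fun n => (Ssum_nonneg A (n+1)).lt_of_ne (Ne.symm (hz n))
    have hrpos : ∀ n, 0 < opNorm (B^(n+1)) := by
      intro n
      have h1 := hSr (n+1)
      have h2 := hpos n
      nlinarith [opNorm_nonneg' (B^(n+1))]
    set a : ℕ → ℝ := fun n => Real.log (Ssum A (n+1)) / ((n:ℝ)+1) with hadef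
    have hpr : pressure A 2 = ⨅ n : ℕ, ((a n : ℝ) : EReal) := by
      unfold pressure
      apply iInf_congr
      intro n
      rw [if_neg (by rw [hcast n]; exact hz n)]
      congr 2
      rw [hcast n]
    have ha_exp : ∀ n : ℕ, Real.exp (a n) = Ssum A (n+1) ^ ((1:ℝ)/((n:ℝ)+1)) := by
      intro n
      rw [Real.rpow_def_of_pos (hpos n), mul_one_div]
    -- key estimate 1 : for every m = k+1 and j, specRad bound pieces
    have chainF : ∀ n j : ℕ,
        opNorm (B ^ ((n+1)*(j+1))) ≤ D * Ssum A (n+1) ^ (j+1) := by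
      intro n j
      calc opNorm (B ^ ((n+1)*(j+1))) ≤ D * Ssum A ((n+1)*(j+1)) := hrS _
        _ ≤ D * Ssum A (n+1) ^ (j+1) :=
          mul_le_mul_of_nonneg_left (Ssum_mul_le A (n+1) (j+1) (Nat.le_add_left 1 j))
            (le_of_lt hD0)
    have chainR : ∀ n j : ℕ,
        Ssum A ((n+1)*(j+1)) ≤ D * opNorm (B ^ (n+1)) ^ (j+1) := by
      intro n j
      calc Ssum A ((n+1)*(j+1)) ≤ D * opNorm (B ^ ((n+1)*(j+1))) := hSr _
        _ = D * opNorm ((B ^ (n+1)) ^ (j+1)) := by rw [← pow_mul]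
        _ ≤ D * opNorm (B ^ (n+1)) ^ (j+1) :=
          mul_le_mul_of_nonneg_left (opNorm_pow_le' _ _ (Nat.le_add_left 1 j)) (le_of_lt hD0)
    by_cases hb : pressure A 2 = ⊥
    · rw [expPressure, if_pos hb]
      refine (le_antisymm ?_ hspec_nonneg).symm
      refine le_of_forall_gt_imp_ge_of_dense ?_
      intro q hq
      have hq' : 0 < q := hq
      have hlt : pressure A 2 < ((Real.log (q / D) : ℝ) : EReal) := by
        rw [hb]; exact EReal.bot_lt_coe _
      rw [hpr] at hlt
      obtain ⟨n, hn⟩ := iInf_lt_iff.mp hlt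
      have han : a n < Real.log (q / D) := EReal.coe_lt_coe_iff.mp hn
      have hexp : Real.exp (a n) < q / D := by
        have := Real.exp_lt_exp.mpr han
        rwa [Real.exp_log (by positivity)] at this
      apply le_of_lt
      calc specRad B ≤ opNorm (B^(n+1)) ^ ((1:ℝ)/(n+1)) := hspec_le n
        _ ≤ (D * Ssum A (n+1)) ^ ((1:ℝ)/(n+1)) :=
            Real.rpow_le_rpow (opNorm_nonneg' _) (hrS (n+1)) (by positivity)
        _ = D ^ ((1:ℝ)/(n+1)) * Ssum A (n+1) ^ ((1:ℝ)/(n+1)) :=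
            Real.mul_rpow (le_of_lt hD0) (Ssum_nonneg A _)
        _ ≤ D * Real.exp (a n) := by
            rw [ha_exp n]
            apply mul_le_mul_of_nonneg_right _ (Real.rpow_nonneg (Ssum_nonneg A _) _)
            calc D ^ ((1:ℝ)/(n+1)) ≤ D ^ (1:ℝ) :=
                  Real.rpow_le_rpow_of_exponent_le hD1 (by
                    rw [div_le_one (by positivity)]
                    linarith [Nat.cast_nonneg (α := ℝ) n])
              _ = D := Real.rpow_one D
        _ < D * (q / D) := by
            exact mul_lt_mul_of_pos_left hexp hD0
        _ = q := by field_simp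
    · rw [expPressure, if_neg hb]
      have hnt : pressure A 2 ≠ ⊤ := by
        refine ne_top_of_le_ne_top (EReal.coe_lt_top (a 0)).ne ?_
        rw [hpr]
        exact iInf_le _ 0
      set p : ℝ := (pressure A 2).toReal with hpdef
      have hpcoe : ((p : ℝ) : EReal) = pressure A 2 := EReal.coe_toReal hnt hb
      have hip : ∀ n, p ≤ a n := by
        intro n
        have h1 : pressure A 2 ≤ ((a n : ℝ) : EReal) := by
          rw [hpr]; exact iInf_le _ n
        rw [← hpcoe] at h1
        exact EReal.coe_le_coe_iff.mp h1
      have hiex : ∀ ε : ℝ, 0 < ε → ∃ n, a n < p + ε := by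
        intro ε hε
        have h1 : pressure A 2 < (((p + ε : ℝ)) : EReal) := by
          rw [← hpcoe]
          exact EReal.coe_lt_coe_iff.mpr (by linarith)
        rw [hpr] at h1
        obtain ⟨n, hn⟩ := iInf_lt_iff.mp h1
        exact ⟨n, EReal.coe_lt_coe_iff.mp hn⟩
      have hcoe_mul : ∀ n j : ℕ, (((n+1)*(j+1) - 1 : ℕ) : ℝ) + 1 = ((n:ℝ)+1)*((j:ℝ)+1) := by
        intro n j
        have h1 : ((n+1)*(j+1) - 1 : ℕ) + 1 = (n+1)*(j+1) := by
          have : 1 ≤ (n+1)*(j+1) := Nat.one_le_iff_ne_zero.mpr (by positivity)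
          omega
        have := congrArg (fun t : ℕ => (t:ℝ)) h1
        push_cast at this
        linarith
      refine le_antisymm ?_ ?_
      · -- exp p ≤ specRad
        apply le_ciInf
        intro k
        apply le_of_forall_mul_rpow _ _ D hD0 (k+1) (Nat.le_add_left 1 k)
        intro j
        push_cast
        set n : ℕ := (k+1)*(j+1) - 1 with hndef
        have hn1 : n + 1 = (k+1)*(j+1) := by
          have : 1 ≤ (k+1)*(j+1) := Nat.one_le_iff_ne_zero.mpr (by positivity)
          omega
        have hcoe : ((n:ℝ)+1) = ((k:ℝ)+1)*((j:ℝ)+1) := hcoe_mul k j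
        calc Real.exp p ≤ Real.exp (a n) := Real.exp_le_exp.mpr (hip n)
          _ = Ssum A (n+1) ^ ((1:ℝ)/((n:ℝ)+1)) := ha_exp n
          _ ≤ (D * opNorm (B^(k+1)) ^ (j+1)) ^ ((1:ℝ)/((n:ℝ)+1)) := by
              apply Real.rpow_le_rpow (Ssum_nonneg A _) _ (by positivity)
              rw [hn1]
              exact chainR k j
          _ = D ^ ((1:ℝ)/(((k:ℝ)+1)*((j:ℝ)+1))) * opNorm (B^(k+1)) ^ ((1:ℝ)/((k:ℝ)+1)) := by
              rw [hcoe]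
              have h := rpow_helper D (opNorm (B^(k+1))) (le_of_lt hD0) (opNorm_nonneg' _)
                (k+1) j (Nat.le_add_left 1 k)
              push_cast at h ⊢
              exact h
      · -- specRad ≤ exp p
        refine le_of_forall_gt_imp_ge_of_dense ?_
        intro q hq
        have hq0 : 0 < q := lt_trans (Real.exp_pos p) hq
        set ε : ℝ := Real.log (q / Real.exp p) with hedef
        have hε : 0 < ε := Real.log_pos (by
          rw [lt_div_iff₀ (Real.exp_pos p)]; linarith)
        obtain ⟨n, hn⟩ := hiex ε hε
        have hq_eq : Real.exp (p + ε) = q := by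
          rw [Real.exp_add, hedef, Real.exp_log (by positivity)]
          field_simp
        have key : specRad B ≤ Real.exp (a n) := by
          apply le_of_forall_mul_rpow _ _ D hD0 (n+1) (Nat.le_add_left 1 n)
          intro j
          push_cast
          set t : ℕ := (n+1)*(j+1) - 1 with htdef
          have ht1 : t + 1 = (n+1)*(j+1) := by
            have : 1 ≤ (n+1)*(j+1) := Nat.one_le_iff_ne_zero.mpr (by positivity)
            omega
          have hcoe : ((t:ℝ)+1) = ((n:ℝ)+1)*((j:ℝ)+1) := hcoe_mul n j
          calc specRad B ≤ opNorm (B^(t+1)) ^ ((1:ℝ)/((t:ℝ)+1)) := hspec_le t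
            _ ≤ (D * Ssum A (n+1) ^ (j+1)) ^ ((1:ℝ)/((t:ℝ)+1)) := by
                apply Real.rpow_le_rpow (opNorm_nonneg' _) _ (by positivity)
                rw [ht1]
                exact chainF n j
            _ = D ^ ((1:ℝ)/(((n:ℝ)+1)*((j:ℝ)+1))) * Ssum A (n+1) ^ ((1:ℝ)/((n:ℝ)+1)) := by
                rw [hcoe]
                have h := rpow_helper D (Ssum A (n+1)) (le_of_lt hD0) (Ssum_nonneg A _)
                  (n+1) j (Nat.le_add_left 1 n)
                push_cast at h ⊢
                exact h
            _ = D ^ ((1:ℝ)/(((n:ℝ)+1)*((j:ℝ)+1))) * Real.exp (a n) := by rw [ha_exp n]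
        calc specRad B ≤ Real.exp (a n) := key
          _ ≤ Real.exp (p + ε) := Real.exp_le_exp.mpr (le_of_lt hn)
          _ = q := hq_eq
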